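/- arXiv:1805.03870 — 2 statements merged into one kernel-verified Lean document; each statement's English description precedes it below -/
import Mathlib

section
/- Let h(n) = (n-2)(n-1)/2 + 1 for integers n ≥ 1 and let k_Δ ≥ 1 be an integer. For every integer j ≥ 1, the set { i ≥ 1 : h(i) < j and j ≤ h(i - 1 + k_Δ) } has strictly fewer than k_Δ elements. -/
/-!
Since `h` is monotone on `n ≥ 1`, two admissible indices `a ≤ b` with `b ≥ a - 1 + kΔ` would give
`j ≤ h (a - 1 + kΔ) ≤ h b < j`. Hence admissible indices pairwise differ by less than `kΔ - 1`,
so they lie in an integer interval of length `kΔ - 1`.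
-/

/-- The sequence from the PHANTOM liveness attack: h(n) = (n-2)(n-1)/2 + 1. -/
def h (n : ℤ) : ℤ := (n - 2) * (n - 1) / 2 + 1

theorem monotoneOn_h : MonotoneOn h (Set.Ici 1) := by
  intro a (ha : 1 ≤ a) b _ hab
  have hprod : (a - 2) * (a - 1) ≤ (b - 2) * (b - 1) := by
    rcases eq_or_lt_of_le hab with rfl | hlt
    · rfl
    · -- the difference is `(b - a) * (a + b - 3)` and `a + b ≥ 3`
      nlinarith
  unfold h
  have := Int.ediv_le_ediv two_pos hprod
  omega

namespace Int

variable {S : Set ℤ} {n : ℤ}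

theorem finite_of_forall_sub_lt (hS : ∀ a ∈ S, ∀ b ∈ S, b - a < n) : S.Finite := by
  rcases S.eq_empty_or_nonempty with rfl | ⟨a, ha⟩
  · exact Set.finite_empty
  · refine (Set.finite_Ioo (a - n) (a + n)).subset fun b hb => ?_
    have := hS a ha b hb
    have := hS b hb a ha
    constructor <;> omega

theorem ncard_le_of_forall_sub_lt (hn : 0 ≤ n) (hS : ∀ a ∈ S, ∀ b ∈ S, b - a < n) :
    (S.ncard : ℤ) ≤ n := by
  rcases S.eq_empty_or_nonempty with rfl | hne
  · simpa using hn
  obtain ⟨m, hmS, hmin⟩ := (finite_of_forall_sub_lt hS).exists_minimal hne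
  have hsub : S ⊆ Set.Ico m (m + n) := fun b hb =>
    ⟨not_lt.1 fun hbm => (hmin hb hbm.le).not_gt hbm, by linarith [hS m hmS b hb]⟩
  calc (S.ncard : ℤ) ≤ (Set.Ico m (m + n)).ncard := by
        exact_mod_cast Set.ncard_le_ncard hsub (Set.finite_Ico _ _)
    _ = n := by
        rw [Set.ncard_eq_toFinset_card', Set.toFinset_Ico, Int.card_Ico]
        omega

end Int

theorem stmt_2_general (kΔ : ℤ) (hkΔ : 1 ≤ kΔ) (j : ℤ) :
    {i : ℤ | 1 ≤ i ∧ h i < j ∧ j ≤ h (i - 1 + kΔ)}.Finite ∧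
      (({i : ℤ | 1 ≤ i ∧ h i < j ∧ j ≤ h (i - 1 + kΔ)}.ncard : ℤ) < kΔ) := by
  have hspread : ∀ a ∈ {i : ℤ | 1 ≤ i ∧ h i < j ∧ j ≤ h (i - 1 + kΔ)},
      ∀ b ∈ {i : ℤ | 1 ≤ i ∧ h i < j ∧ j ≤ h (i - 1 + kΔ)}, b - a < kΔ - 1 := by
    rintro a ⟨ha, -, hja⟩ b ⟨hb, hbj, -⟩
    by_contra! hab
    have := monotoneOn_h (show 1 ≤ a - 1 + kΔ by omega) (show 1 ≤ b from hb) (by omega)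
    omega
  exact ⟨Int.finite_of_forall_sub_lt hspread,
    by linarith [Int.ncard_le_of_forall_sub_lt (by omega) hspread]⟩

/-- For every integer j ≥ 1, the set { i ≥ 1 : h(i) < j and j ≤ h(i - 1 + k_Δ) }
    is finite and has strictly fewer than k_Δ elements. -/
theorem stmt_2 (kΔ : ℤ) (hkΔ : 1 ≤ kΔ) (j : ℤ) (hj : 1 ≤ j) :
    {i : ℤ | 1 ≤ i ∧ h i < j ∧ j ≤ h (i - 1 + kΔ)}.Finite ∧
      (({i : ℤ | 1 ≤ i ∧ h i < j ∧ j ≤ h (i - 1 + kΔ)}.ncard : ℤ) < kΔ) :=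
  stmt_2_general kΔ hkΔ j
end

section
/- Let k' ≥ 0 and k_Δ ≥ 7 be integers satisfying k_Δ(k_Δ - 7) ≥ 4k', and let h(n) = (n-2)(n-1)/2 + 1. Then for every integer i ≥ 1, (i - 1) + h(i) < h(i - 1 + k_Δ) - 1 - k'. -/
lemma h_eval (n : ℤ) : ∃ a : ℤ, h n = a + 1 ∧ 2 * a = (n - 2) * (n - 1) := by
  have he : Even ((n - 2) * (n - 1)) := by
    have := Int.even_mul_succ_self (n - 2)
    have h2 : n - 2 + 1 = n - 1 := by ring
    rwa [h2] at this
  obtain ⟨a, ha⟩ := he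
  refine ⟨a, ?_, by omega⟩
  unfold h
  rw [ha, show a + a = 2 * a by ring, Int.mul_ediv_cancel_left _ two_ne_zero]

/-- Let k' ≥ 0 and k_Δ ≥ 7 be integers satisfying k_Δ(k_Δ - 7) ≥ 4k'.
    Then for every integer i ≥ 1, (i - 1) + h(i) < h(i - 1 + k_Δ) - 1 - k'. -/
theorem stmt_7 (k' kΔ : ℤ) (hk' : 0 ≤ k') (hkΔ : 7 ≤ kΔ)
    (hparam : kΔ * (kΔ - 7) ≥ 4 * k')
    (i : ℤ) (hi : 1 ≤ i) :
    (i - 1) + h i < h (i - 1 + kΔ) - 1 - k' := by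
  obtain ⟨a, ha1, ha2⟩ := h_eval i
  obtain ⟨b, hb1, hb2⟩ := h_eval (i - 1 + kΔ)
  rw [ha1, hb1]
  nlinarith [mul_nonneg (sub_nonneg.mpr hi) (sub_nonneg.mpr hkΔ)]
end
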